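/- arXiv:1208.6420 — 6 statements merged into one kernel-verified Lean document; each statement's English description precedes it below -/
import Mathlib

section
/- Solvability of the SOF linear equation with bound: let m, n ≥ 1, let B ∈ M_m(ℂ) with ‖B‖ ≤ C′, let A ∈ M_n(ℂ) be invertible with ‖A⁻¹‖ ≤ K/2 for constants C′, K > 0, and let μ ∈ ℂ^{m×n} with ‖μ‖ ≤ γ. If 0 < ε ≤ 1/(K C′), then there exists φ ∈ ℂ^{m×n} satisfying ε B φ + μ − φ A = 0 with ‖φ‖ ≤ K γ; moreover φ is the unique solution in the closed ball of radius Kγ/2 centered at μ A⁻¹. -/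
open scoped Matrix.Norms.L2Operator NNReal

/-!
Since `A` is invertible, the equation `ε B φ + μ − φ A = 0` is the fixed-point equation
`φ = μ A⁻¹ + L φ` for the linear map `L φ = (ε B) φ A⁻¹`. Submultiplicativity of the operator
norm gives `‖L‖ ≤ ε ‖B‖ ‖A⁻¹‖ ≤ ε C′ K / 2 ≤ 1/2`, so `φ ↦ μ A⁻¹ + L φ` is a contraction with a
unique fixed point, and `‖φ‖ ≤ ‖μ A⁻¹‖ + ‖φ‖ / 2` gives `‖φ‖ ≤ 2 ‖μ A⁻¹‖ ≤ K γ`.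
-/

section AffineContraction

variable {E : Type*} [NormedAddCommGroup E]

theorem existsUnique_eq_add_apply_of_norm_le {F : Type*} [FunLike F E E] [AddMonoidHomClass F E E]
    [CompleteSpace E] (L : F) {q : ℝ≥0} (hq : q < 1)
    (hL : ∀ x, ‖L x‖ ≤ q * ‖x‖) (b : E) : ∃! x, x = b + L x := by
  have hcontr : ContractingWith q (fun x => b + L x) :=
    ⟨hq, LipschitzWith.of_dist_le_mul fun x y => by
      simpa [dist_eq_norm, ← map_sub] using hL (x - y)⟩
  exact ⟨_, hcontr.fixedPoint_isFixedPt.symm, fun y hy => hcontr.fixedPoint_unique hy.symm⟩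

theorem one_sub_mul_norm_le_of_eq_add_apply (L : E → E) {q : ℝ} (hL : ∀ x, ‖L x‖ ≤ q * ‖x‖)
    {b x : E} (hx : x = b + L x) : (1 - q) * ‖x‖ ≤ ‖b‖ := by
  have : ‖x‖ ≤ ‖b‖ + ‖L x‖ := (congrArg norm hx).trans_le (norm_add_le _ _)
  linarith [hL x]

end AffineContraction

namespace Matrix

variable {𝕜 l m n p : Type*} [RCLike 𝕜] [Fintype l] [Fintype m] [Fintype n] [Fintype p]
  [DecidableEq m] [DecidableEq n] [DecidableEq p]

theorem l2_opNorm_mul_mul_le (X : Matrix l m 𝕜) (φ : Matrix m n 𝕜) (Y : Matrix n p 𝕜) :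
    ‖X * φ * Y‖ ≤ ‖X‖ * ‖Y‖ * ‖φ‖ :=
  calc ‖X * φ * Y‖ ≤ ‖X‖ * ‖φ‖ * ‖Y‖ :=
        (l2_opNorm_mul _ _).trans (by gcongr; exact l2_opNorm_mul _ _)
    _ = ‖X‖ * ‖Y‖ * ‖φ‖ := by ring

end Matrix

theorem Matrix.sub_mul_eq_zero_iff_eq_mul_inv {R m n : Type*} [CommRing R] [Fintype n]
    [DecidableEq n] {A : Matrix n n R} (hA : IsUnit A) (X φ : Matrix m n R) :
    X - φ * A = 0 ↔ φ = X * A⁻¹ := by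
  have := hA.invertible
  rw [sub_eq_zero, eq_comm (a := φ), Matrix.mul_inv_eq_iff_eq_mul_of_invertible]

theorem sof_linear_equation_solvable_general
    {m n : ℕ}
    (B : Matrix (Fin m) (Fin m) ℂ) (A : Matrix (Fin n) (Fin n) ℂ)
    (μ : Matrix (Fin m) (Fin n) ℂ)
    (C' K γ ε : ℝ)
    (hB : ‖B‖ ≤ C') (hAunit : IsUnit A) (hAinv : ‖A⁻¹‖ ≤ K / 2)
    (hμ : ‖μ‖ ≤ γ) (hε0 : 0 < ε) (hε : ε ≤ 1 / (K * C')) :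
    ∃ φ : Matrix (Fin m) (Fin n) ℂ,
      ε • (B * φ) + μ - φ * A = 0 ∧ ‖φ‖ ≤ K * γ ∧
      φ ∈ Metric.closedBall (μ * A⁻¹) (K * γ / 2) ∧
      ∀ φ' : Matrix (Fin m) (Fin n) ℂ,
        ε • (B * φ') + μ - φ' * A = 0 →
        φ' ∈ Metric.closedBall (μ * A⁻¹) (K * γ / 2) → φ' = φ := by
  have hC' : 0 ≤ C' := (norm_nonneg B).trans hB
  have hKC : 0 < K * C' := one_div_pos.mp (hε0.trans_le hε)
  have hεKC : ε * C' * (K / 2) ≤ 1 / 2 := by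
    rw [le_div_iff₀ hKC] at hε
    linarith
  set L := (mulRightLinearMap (Fin m) ℂ A⁻¹).comp
    (mulLeftLinearMap (Fin n) ℂ (ε • B))
  have hL : ∀ φ, ‖L φ‖ ≤ ((1 / 2 : ℝ≥0) : ℝ) * ‖φ‖ := fun φ =>
    calc ‖L φ‖ ≤ ‖ε • B‖ * ‖A⁻¹‖ * ‖φ‖ := Matrix.l2_opNorm_mul_mul_le _ _ _
      _ ≤ ε * C' * (K / 2) * ‖φ‖ := by rw [norm_smul, Real.norm_of_nonneg hε0.le]; gcongr
      _ ≤ ((1 / 2 : ℝ≥0) : ℝ) * ‖φ‖ := by push_cast; gcongr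
  have hsolve : ∀ φ, ε • (B * φ) + μ - φ * A = 0 ↔ φ = μ * A⁻¹ + L φ := fun φ => by
    rw [Matrix.sub_mul_eq_zero_iff_eq_mul_inv hAunit]
    simp [L, Matrix.add_mul, add_comm, Matrix.smul_mul]
  obtain ⟨φ, hφ, huniq⟩ := existsUnique_eq_add_apply_of_norm_le L (by norm_num) hL (μ * A⁻¹)
  have hb : ‖μ * A⁻¹‖ ≤ K * γ / 2 :=
    calc ‖μ * A⁻¹‖ ≤ ‖μ‖ * ‖A⁻¹‖ := Matrix.l2_opNorm_mul _ _
      _ ≤ γ * (K / 2) := mul_le_mul hμ hAinv (norm_nonneg _) ((norm_nonneg μ).trans hμ)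
      _ = K * γ / 2 := by ring
  have hnorm := one_sub_mul_norm_le_of_eq_add_apply L hL hφ
  have hdist : dist φ (μ * A⁻¹) = ‖L φ‖ := by rw [dist_eq_norm, sub_eq_iff_eq_add'.mpr hφ]
  refine ⟨φ, (hsolve φ).mpr hφ, ?_, ?_, fun φ' hφ' _ => huniq φ' ((hsolve φ').mp hφ')⟩
  · push_cast at hnorm
    linarith
  · rw [Metric.mem_closedBall, hdist]
    push_cast at hnorm hL
    linarith [hL φ]

/-- **Solvability of the SOF linear equation with bound** (Lemma 5.1).
Matrices carry the operator norms induced by the Euclidean norms.  Let `B ∈ M_m(ℂ)`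
with `‖B‖ ≤ C′`, `A ∈ M_n(ℂ)` invertible with `‖A⁻¹‖ ≤ K/2`, and `μ ∈ ℂ^{m×n}` with
`‖μ‖ ≤ γ`.  If `0 < ε ≤ 1/(K C′)` then the equation `ε B φ + μ − φ A = 0` has a
solution `φ` with `‖φ‖ ≤ K γ`, unique in the closed ball of radius `Kγ/2` centered
at `μ A⁻¹`. -/
theorem sof_linear_equation_solvable
    {m n : ℕ} (hm : 1 ≤ m) (hn : 1 ≤ n)
    (B : Matrix (Fin m) (Fin m) ℂ) (A : Matrix (Fin n) (Fin n) ℂ)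
    (μ : Matrix (Fin m) (Fin n) ℂ)
    (C' K γ ε : ℝ) (hC' : 0 < C') (hK : 0 < K)
    (hB : ‖B‖ ≤ C') (hAunit : IsUnit A) (hAinv : ‖A⁻¹‖ ≤ K / 2)
    (hμ : ‖μ‖ ≤ γ) (hε0 : 0 < ε) (hε : ε ≤ 1 / (K * C')) :
    ∃ φ : Matrix (Fin m) (Fin n) ℂ,
      ε • (B * φ) + μ - φ * A = 0 ∧ ‖φ‖ ≤ K * γ ∧
      φ ∈ Metric.closedBall (μ * A⁻¹) (K * γ / 2) ∧
      ∀ φ' : Matrix (Fin m) (Fin n) ℂ,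
        ε • (B * φ') + μ - φ' * A = 0 →
        φ' ∈ Metric.closedBall (μ * A⁻¹) (K * γ / 2) → φ' = φ :=
  sof_linear_equation_solvable_general B A μ C' K γ ε hB hAunit hAinv hμ hε0 hε
end

section
/- Perturbed Sylvester system: let A ∈ M_n(ℂ) be such that the Sylvester operator S(X) = AᵀX + XA on M_n(ℂ) is invertible with ‖S⁻¹‖ ≤ K/2 (operator norm with respect to the matrix operator norm), let D ∈ M_m(ℂ) with ‖D‖_∞ ≤ C′ in the sense that Σ_j |D_{ij}| ≤ C′ for each i, and let Q¹,…,Q^m ∈ M_n(ℂ) be symmetric with max_i ‖Qⁱ‖ ≤ q. If 0 < ε ≤ 1/(KC′), then there exists a family (ψ¹,…,ψ^m) of matrices in M_n(ℂ) satisfying ε Σ_{j=1}^m D_{ij} ψ^j + Qⁱ − Aᵀψⁱ − ψⁱA = 0 for every 1 ≤ i ≤ m, with each ψⁱ symmetric and max_i ‖ψⁱ‖ ≤ Kq; this solution is unique among families with max_i ‖ψⁱ‖ ≤ Kq. -/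
open Matrix
open scoped Matrix.Norms.L2Operator

/-!
Since the Sylvester operator `S` is invertible, the system is equivalent to the fixed-point
equation `ψ = S⁻¹Q + ε (D ⊗ S⁻¹) ψ` on families of matrices with the sup norm. The row-sum bound
on `D` gives `‖ε (D ⊗ S⁻¹)‖ ≤ ε C′ K / 2 ≤ 1/2`, so `1 - ε (D ⊗ S⁻¹)` is invertible: the solution
exists, is unique, and has norm at most `2 ‖S⁻¹Q‖ ≤ Kq`. Transposing the system maps solutions
to solutions because the `Qⁱ` are symmetric, so uniqueness forces `ψⁱ` to be symmetric.
-/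

namespace ContinuousLinearMap

variable {𝕜 E : Type*} [NontriviallyNormedField 𝕜] [NormedAddCommGroup E] [NormedSpace 𝕜 E]

theorem existsUnique_sub_apply_eq [CompleteSpace E] (L : E →L[𝕜] E) (hL : ‖L‖ < 1) (c : E) :
    ∃! x, x - L x = c :=
  (isUnit_iff_bijective.1 (isUnit_one_sub_of_norm_lt_one hL)).existsUnique c

theorem norm_le_of_sub_apply_eq {L : E →L[𝕜] E} {r : ℝ} (hL : ‖L‖ ≤ r) {x c : E}
    (h : x - L x = c) : (1 - r) * ‖x‖ ≤ ‖c‖ := by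
  have hx : ‖x‖ ≤ ‖c‖ + r * ‖x‖ :=
    calc ‖x‖ = ‖c + L x‖ := by rw [← h, sub_add_cancel]
      _ ≤ ‖c‖ + ‖L‖ * ‖x‖ := (norm_add_le _ _).trans (by gcongr; exact L.le_opNorm x)
      _ ≤ ‖c‖ + r * ‖x‖ := by gcongr
  linarith

variable {ι : Type*} [Fintype ι]

noncomputable def kronecker (D : Matrix ι ι 𝕜) (T : E →L[𝕜] E) :
    (ι → E) →L[𝕜] (ι → E) :=
  pi fun i => T.comp (∑ j, D i j • proj j)

@[simp]
theorem kronecker_apply (D : Matrix ι ι 𝕜) (T : E →L[𝕜] E)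
    (ψ : ι → E) (i : ι) : kronecker D T ψ i = T (∑ j, D i j • ψ j) := by
  simp [kronecker]

theorem norm_kronecker_le {D : Matrix ι ι 𝕜} {C : ℝ} (hC : 0 ≤ C)
    (hD : ∀ i, ∑ j, ‖D i j‖ ≤ C) (T : E →L[𝕜] E) : ‖kronecker D T‖ ≤ ‖T‖ * C := by
  refine opNorm_le_bound _ (by positivity) fun ψ => ?_
  refine (pi_norm_le_iff_of_nonneg (by positivity)).2 fun i => ?_
  calc ‖kronecker D T ψ i‖ ≤ ‖T‖ * ‖∑ j, D i j • ψ j‖ := by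
        rw [kronecker_apply]; exact T.le_opNorm _
    _ ≤ ‖T‖ * ∑ j, ‖D i j‖ * ‖ψ‖ := by
        gcongr
        refine (norm_sum_le _ _).trans (Finset.sum_le_sum fun j _ => ?_)
        rw [norm_smul]
        gcongr
        exact norm_le_pi_norm ψ j
    _ ≤ ‖T‖ * C * ‖ψ‖ := by
        rw [← Finset.sum_mul, mul_assoc]
        gcongr
        exact hD i

end ContinuousLinearMap

section Sylvester

variable {n m : ℕ} {A : Matrix (Fin n) (Fin n) ℂ}
  {Sinv : Matrix (Fin n) (Fin n) ℂ →L[ℂ] Matrix (Fin n) (Fin n) ℂ}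

theorem sylvester_eq_iff_eq_apply
    (hS : ∀ M, Sinv (Aᵀ * M + M * A) = M ∧ Aᵀ * Sinv M + Sinv M * A = M) (X Y) :
    Aᵀ * X + X * A = Y ↔ X = Sinv Y :=
  ⟨fun h => h ▸ (hS X).1.symm, fun h => h ▸ (hS Y).2⟩

theorem perturbedSylvester_iff_sub_kronecker_eq
    (hS : ∀ M, Sinv (Aᵀ * M + M * A) = M ∧ Aᵀ * Sinv M + Sinv M * A = M)
    (ε : ℝ) (D : Matrix (Fin m) (Fin m) ℂ) (Q ψ : Fin m → Matrix (Fin n) (Fin n) ℂ) :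
    (∀ i, ε • (∑ j, D i j • ψ j) + Q i - Aᵀ * ψ i - ψ i * A = 0) ↔
      ψ - (ε • ContinuousLinearMap.kronecker D Sinv) ψ = fun i => Sinv (Q i) := by
  rw [funext_iff]
  refine forall_congr' fun i => ?_
  rw [sub_sub, sub_eq_zero, eq_comm, sylvester_eq_iff_eq_apply hS, map_add, Sinv.map_smul_of_tower,
    Pi.sub_apply, _root_.smul_apply, Pi.smul_apply,
    ContinuousLinearMap.kronecker_apply, sub_eq_iff_eq_add']

theorem perturbedSylvester_transpose {ε : ℝ} {D : Matrix (Fin m) (Fin m) ℂ}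
    {Q ψ : Fin m → Matrix (Fin n) (Fin n) ℂ} (hQ : ∀ i, (Q i)ᵀ = Q i)
    (hψ : ∀ i, ε • (∑ j, D i j • ψ j) + Q i - Aᵀ * ψ i - ψ i * A = 0) (i : Fin m) :
    ε • (∑ j, D i j • (ψ j)ᵀ) + Q i - Aᵀ * (ψ i)ᵀ - (ψ i)ᵀ * A = 0 := by
  have h := congrArg transpose (hψ i)
  simp only [transpose_sub, transpose_add, transpose_smul, transpose_mul, transpose_sum,
    transpose_transpose, hQ, transpose_zero] at h
  rwa [sub_right_comm]

end Sylvester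

/-- **Perturbed Sylvester system** (the linear system (5.3)/(6.5)).  Matrices carry
the operator norms induced by the Euclidean norms.  If the Sylvester operator
`S(X) = AᵀX + XA` is invertible with `‖S⁻¹‖ ≤ K/2`, the rows of `D` satisfy
`Σⱼ|D_{ij}| ≤ C′`, each `Qⁱ` is symmetric with `‖Qⁱ‖ ≤ q`, and `0 < ε ≤ 1/(KC′)`,
then the system `ε Σⱼ D_{ij} ψʲ + Qⁱ − Aᵀψⁱ − ψⁱA = 0` has a solution family with
each `ψⁱ` symmetric and `max_i ‖ψⁱ‖ ≤ Kq`, unique among families with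
`max_i ‖ψⁱ‖ ≤ Kq`. -/
theorem perturbed_sylvester_system
    {n m : ℕ} (A : Matrix (Fin n) (Fin n) ℂ)
    (Sinv : Matrix (Fin n) (Fin n) ℂ →L[ℂ] Matrix (Fin n) (Fin n) ℂ)
    (hS : ∀ M : Matrix (Fin n) (Fin n) ℂ,
      Sinv (Aᵀ * M + M * A) = M ∧ Aᵀ * (Sinv M) + (Sinv M) * A = M)
    (K C' q ε : ℝ) (hK : 0 < K) (hC' : 0 < C')
    (hSinv : ‖Sinv‖ ≤ K / 2)
    (D : Matrix (Fin m) (Fin m) ℂ)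
    (hD : ∀ i, ∑ j, ‖D i j‖ ≤ C')
    (Q : Fin m → Matrix (Fin n) (Fin n) ℂ)
    (hQsymm : ∀ i, (Q i)ᵀ = Q i) (hQ : ∀ i, ‖Q i‖ ≤ q)
    (hε0 : 0 < ε) (hε : ε ≤ 1 / (K * C')) :
    ∃ ψ : Fin m → Matrix (Fin n) (Fin n) ℂ,
      (∀ i, ε • (∑ j, D i j • ψ j) + Q i - Aᵀ * ψ i - ψ i * A = 0) ∧
      (∀ i, (ψ i)ᵀ = ψ i) ∧ (∀ i, ‖ψ i‖ ≤ K * q) ∧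
      ∀ ψ' : Fin m → Matrix (Fin n) (Fin n) ℂ,
        (∀ i, ε • (∑ j, D i j • ψ' j) + Q i - Aᵀ * ψ' i - ψ' i * A = 0) →
        (∀ i, ‖ψ' i‖ ≤ K * q) → ψ' = ψ := by
  have hL : ‖ε • ContinuousLinearMap.kronecker D Sinv‖ ≤ 1 / 2 :=
    calc _ ≤ ε * (K / 2 * C') := by
          rw [norm_smul, Real.norm_of_nonneg hε0.le]
          gcongr
          exact (ContinuousLinearMap.norm_kronecker_le hC'.le hD Sinv).trans (by gcongr)
      _ ≤ 1 / 2 := by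
          rw [le_div_iff₀ (by positivity)] at hε
          linarith
  obtain ⟨ψ, hψ, huniq⟩ : ∃! ψ : Fin m → Matrix (Fin n) (Fin n) ℂ,
      ∀ i, ε • (∑ j, D i j • ψ j) + Q i - Aᵀ * ψ i - ψ i * A = 0 := by
    simpa only [perturbedSylvester_iff_sub_kronecker_eq hS] using
      ContinuousLinearMap.existsUnique_sub_apply_eq _ (hL.trans_lt one_half_lt_one)
        fun i => Sinv (Q i)
  refine ⟨ψ, hψ, fun i => congrFun (huniq _ (perturbedSylvester_transpose hQsymm hψ)) i,
    fun i => ?_, fun ψ' hψ' _ => huniq ψ' hψ'⟩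
  have : Nonempty (Fin m) := ⟨i⟩
  have hψnorm := ContinuousLinearMap.norm_le_of_sub_apply_eq hL
    ((perturbedSylvester_iff_sub_kronecker_eq hS ε D Q ψ).1 hψ)
  have hc : ‖fun i => Sinv (Q i)‖ ≤ K / 2 * q :=
    (pi_norm_le_iff_of_nonempty _).2 fun i => (Sinv.le_opNorm _).trans (by gcongr; exact hQ i)
  linarith [norm_le_pi_norm ψ i]
end

section
/- Telescoping identity for the SO (straightening-out) iteration: let ε ∈ ℝ, let X₀ : ℝ^{n_s}×ℝ^{n_f} → ℝ^{n_s} and Y₀ : ℝ^{n_s}×ℝ^{n_f} → ℝ^{n_f} be functions, let η₁,…,η_n : ℝ^{n_s} → ℝ^{n_f} be differentiable, and define recursively for 1 ≤ i ≤ n−1: X_i(x,y) = X_{i−1}(x, y + η_i(x)) and Y_i(x,y) = −ε Dη_i(x) X_{i−1}(x, y + η_i(x)) + Y_{i−1}(x, y + η_i(x)), where Dη_i(x) ∈ ℝ^{n_f×n_s} is the Jacobian of η_i. Then, with the partial sums η^k = Σ_{i=1}^k η_i (and η⁰ = 0), for every n ≥ 1: Y_{n−1}(x, η_n(x)) = −ε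 Dη^{n−1}(x) X₀(x, η^n(x)) + Y₀(x, η^n(x)) for all x ∈ ℝ^{n_s}. In particular, solving Y_{n−1}(x, η_n(x)) = 0 at each step is equivalent to the Fraser–Roussel iteration −ε ∂_x η^{n−1} X₀(x, η^n) + Y₀(x, η^n) = 0. -/
/-!
Each substitution `y ↦ y + η_i(x)` shifts the fast variable by one more summand, so after
`k` steps `X_k(x, y) = X₀(x, y + η^k(x))`. The fast field picks up one term
`−ε Dη_i(x) X₀(x, y + η^k(x))` per step, and these add up to `−ε Dη^k(x) X₀(x, y + η^k(x))`
because differentiation is additive. Evaluating at `k = n − 1`, `y = η_n(x)` gives the identity.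
-/

open Finset

lemma sum_Icc_one_succ_eq_add {M : Type*} [AddCommMonoid M] (f : ℕ → M) (k : ℕ) :
    ∑ i ∈ Icc 1 (k + 1), f i = f (k + 1) + ∑ i ∈ Icc 1 k, f i := by
  rw [sum_Icc_succ_top (Nat.le_add_left 1 k), add_comm]

lemma slow_field_eq_of_straightening {α β M : Type*} [AddCommMonoid M] {X : ℕ → α × M → β}
    {η : ℕ → α → M} {m : ℕ}
    (hX : ∀ i, 1 ≤ i → i ≤ m → ∀ x y, X i (x, y) = X (i - 1) (x, y + η i x)) :
    ∀ k ≤ m, ∀ x y, X k (x, y) = X 0 (x, y + ∑ i ∈ Icc 1 k, η i x) := by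
  intro k
  induction k with
  | zero => simp
  | succ k ih =>
    intro hk x y
    rw [hX (k + 1) (Nat.le_add_left 1 k) hk, Nat.add_sub_cancel, ih (k.le_succ.trans hk),
      sum_Icc_one_succ_eq_add, add_assoc]

lemma fast_field_eq_of_straightening {𝕜 E F : Type*} [NontriviallyNormedField 𝕜]
    [NormedAddCommGroup E] [NormedSpace 𝕜 E] [NormedAddCommGroup F] [NormedSpace 𝕜 F]
    {X : ℕ → E × F → E} {Y : ℕ → E × F → F} {η : ℕ → E → F} {m : ℕ} (ε : 𝕜)
    (hX : ∀ i, 1 ≤ i → i ≤ m → ∀ x y, X i (x, y) = X (i - 1) (x, y + η i x))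
    (hY : ∀ i, 1 ≤ i → i ≤ m → ∀ x y,
      Y i (x, y) = -ε • (fderiv 𝕜 (η i) x) (X (i - 1) (x, y + η i x)) +
        Y (i - 1) (x, y + η i x)) :
    ∀ k ≤ m, ∀ x y, Y k (x, y) =
      -ε • (∑ i ∈ Icc 1 k, fderiv 𝕜 (η i) x) (X 0 (x, y + ∑ i ∈ Icc 1 k, η i x)) +
        Y 0 (x, y + ∑ i ∈ Icc 1 k, η i x) := by
  intro k
  induction k with
  | zero => simp
  | succ k ih =>
    intro hk x y
    have hk' : k ≤ m := k.le_succ.trans hk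
    have hshift : y + η (k + 1) x + ∑ i ∈ Icc 1 k, η i x = y + ∑ i ∈ Icc 1 (k + 1), η i x := by
      rw [sum_Icc_one_succ_eq_add, add_assoc]
    rw [hY (k + 1) (Nat.le_add_left 1 k) hk, Nat.add_sub_cancel, ih hk',
      slow_field_eq_of_straightening hX k hk', hshift, sum_Icc_one_succ_eq_add (fun i => fderiv 𝕜 (η i) x),
      add_apply, smul_add]
    abel

/-- **Telescoping identity for the SO (straightening-out) iteration**.
With `X_i(x,y) = X_{i−1}(x, y+η_i(x))` and
`Y_i(x,y) = −ε Dη_i(x) X_{i−1}(x, y+η_i(x)) + Y_{i−1}(x, y+η_i(x))`, the `n`-th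
straightened-out fast field evaluated at `y = η_n(x)` equals the Fraser–Roussel
expression `−ε D(η¹+⋯+η^{n−1})(x) X₀(x, η^n(x)) + Y₀(x, η^n(x))`, where
`η^k = Σ_{i=1}^k η_i`. -/
theorem so_telescoping_identity
    {ns nf : ℕ} (ε : ℝ)
    (X : ℕ → EuclideanSpace ℝ (Fin ns) × EuclideanSpace ℝ (Fin nf) →
      EuclideanSpace ℝ (Fin ns))
    (Y : ℕ → EuclideanSpace ℝ (Fin ns) × EuclideanSpace ℝ (Fin nf) →
      EuclideanSpace ℝ (Fin nf))
    (η : ℕ → EuclideanSpace ℝ (Fin ns) → EuclideanSpace ℝ (Fin nf))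
    (hη : ∀ i, Differentiable ℝ (η i))
    (n : ℕ) (hn : 1 ≤ n)
    (hX : ∀ i, 1 ≤ i → i ≤ n - 1 → ∀ x y, X i (x, y) = X (i - 1) (x, y + η i x))
    (hY : ∀ i, 1 ≤ i → i ≤ n - 1 → ∀ x y,
      Y i (x, y) = -ε • (fderiv ℝ (η i) x) (X (i - 1) (x, y + η i x)) +
        Y (i - 1) (x, y + η i x)) :
    ∀ x, Y (n - 1) (x, η n x) =
      -ε • (fderiv ℝ (fun x' => ∑ i ∈ Finset.Icc 1 (n - 1), η i x') x)
          (X 0 (x, ∑ i ∈ Finset.Icc 1 n, η i x)) +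
        Y 0 (x, ∑ i ∈ Finset.Icc 1 n, η i x) := by
  intro x
  obtain ⟨m, rfl⟩ := Nat.exists_eq_add_of_le' hn
  rw [Nat.add_sub_cancel] at hX hY ⊢
  rw [fast_field_eq_of_straightening ε hX hY m le_rfl, fderiv_fun_sum fun i _ => (hη i).differentiableAt,
    sum_Icc_one_succ_eq_add (η · x) m]
end

section
/- Effect of the linear SOF transformation on Taylor coefficients: let ε ∈ ℝ and let Λ : ℝ^{n_s} → ℝ^{n_s}, μ : ℝ^{n_s} → ℝ^{n_s×n_f}, A : ℝ^{n_s} → ℝ^{n_f×n_f}, φ : ℝ^{n_s} → ℝ^{n_s×n_f} be C¹, and let T : ℝ^{n_s}×ℝ^{n_f} → ℝ^{n_s}, R : ℝ^{n_s}×ℝ^{n_f} → ℝ^{n_f} be C¹ with T(x,0) = 0, ∂_yT(x,0) = 0, R(x,0) = 0, ∂_yR(x,0) = 0 for all x. Define F(x,y) = (ε(Λ(x) + μ(x)y + T(x,y)), A(x)y + R(x,y)) and Φ(x,y) = (x + εφ(x)y, y). Then DΦ(x,0) is invertible for every x, on a neighborhood of ℝ^{n_s}×{0} the pullback G = (DΦ)⁻¹·(F∘Φ)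 is defined, and its slow component G_s and fast component G_f satisfy, for every x: G_s(x,0) = εΛ(x), G_f(x,0) = 0, ∂_y G_f(x,0) = A(x), and ∂_y G_s(x,0) = ε( ε DΛ(x)φ(x) + μ(x) − φ(x)A(x) − ε(∂_xφ·Λ)(x) ), where ∂_xφ·Λ is the n_s×n_f matrix whose k-th column is the directional derivative of the k-th column of φ at x in the direction Λ(x). -/
/-!
`DΦ(x, y)` is the shear `S = (u, w) ↦ (u + εφ(x)w, w)` plus the correction
`(u, w) ↦ (ε Dφ(x)(u) y, 0)`, which is linear in `y`. At `y = 0` it is `S`, whose inverse is the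
shear by `-εφ(x)`; since `DΦ` is continuous and the equivalences form an open set, `DΦ` stays
invertible near `y = 0`. Differentiating `y ↦ DΦ(x, y)⁻¹ F(Φ(x, y))` at `0` with
`d(M⁻¹) = -M⁻¹ dM M⁻¹` gives `v ↦ S⁻¹ (DF(x, 0)(εφ(x)v, v) - (ε² Dφ(x)(Λ x) v, 0))`, and
`DF(x, 0)(u, v) = (ε(DΛ(x)u + μ(x)v), A(x)v)` because `T` and `R` vanish to first order
along `y = 0`.
-/

open ContinuousLinearMap

theorem HasFDerivAt.inverse_apply {𝕜 E V : Type*} [NontriviallyNormedField 𝕜]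
    [NormedAddCommGroup E] [NormedSpace 𝕜 E] [NormedAddCommGroup V] [NormedSpace 𝕜 V]
    [CompleteSpace V] {M : E → V →L[𝕜] V} {M' : E →L[𝕜] V →L[𝕜] V} {h : E → V}
    {h' : E →L[𝕜] V} {a : E} (e : V ≃L[𝕜] V) (hM : HasFDerivAt M M' a) (hMa : M a = e)
    (hh : HasFDerivAt h h' a) :
    HasFDerivAt (fun y => (M y).inverse (h y))
      ((e.symm : V →L[𝕜] V).comp (h' - (apply 𝕜 V (e.symm (h a))).comp M')) a := by
  have hMu : M a = e.toUnit := hMa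
  have hinv := (hMu ▸ hasFDerivAt_ringInverse (𝕜 := 𝕜) e.toUnit).comp a hM
  convert hinv.clm_apply hh using 1
  · simp [ringInverse_eq_inverse]
  · ext v
    simp [hMa, ringInverse_eq_inverse, ContinuousLinearEquiv.toUnit, sub_eq_add_neg]

theorem ContDiff.isOpen_setOf_fderiv_equiv {𝕜 E F : Type*} [NontriviallyNormedField 𝕜]
    [NormedAddCommGroup E] [NormedSpace 𝕜 E] [CompleteSpace E] [NormedAddCommGroup F]
    [NormedSpace 𝕜 F] {f : E → F} (hf : ContDiff 𝕜 1 f) :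
    IsOpen {z | ∃ e : E ≃L[𝕜] F, (e : E →L[𝕜] F) = fderiv 𝕜 f z} :=
  ContinuousLinearEquiv.isOpen.preimage (hf.continuous_fderiv one_ne_zero)

section SlowFast

variable {𝕜 E F : Type*} [NontriviallyNormedField 𝕜] [NormedAddCommGroup E] [NormedSpace 𝕜 E]
  [NormedAddCommGroup F] [NormedSpace 𝕜 F]

def shear (L : F →L[𝕜] E) : (E × F) ≃L[𝕜] (E × F) :=
  ContinuousLinearEquiv.equivOfInverse ((fst 𝕜 E F + L.comp (snd 𝕜 E F)).prod (snd 𝕜 E F))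
    ((fst 𝕜 E F - L.comp (snd 𝕜 E F)).prod (snd 𝕜 E F)) (fun z => by simp) (fun z => by simp)

@[simp]
theorem shear_apply (L : F →L[𝕜] E) (z : E × F) : shear L z = (z.1 + L z.2, z.2) := rfl

@[simp]
theorem shear_symm_apply (L : F →L[𝕜] E) (z : E × F) : (shear L).symm z = (z.1 - L z.2, z.2) :=
  rfl

def shearMap (ψ : E → F →L[𝕜] E) (z : E × F) : E × F := (z.1 + ψ z.1 z.2, z.2)

theorem ContDiff.shearMap {n : WithTop ℕ∞} {ψ : E → F →L[𝕜] E} (hψ : ContDiff 𝕜 n ψ) :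
    ContDiff 𝕜 n (shearMap ψ) :=
  (contDiff_fst.add ((hψ.comp contDiff_fst).clm_apply contDiff_snd)).prodMk contDiff_snd

noncomputable def shearDerivCorrection (B : E →L[𝕜] F →L[𝕜] E) :
    F →L[𝕜] (E × F →L[𝕜] E × F) :=
  (compL 𝕜 (E × F) E (E × F) (inl 𝕜 E F)).comp ((compL 𝕜 (E × F) E E).flip (fst 𝕜 E F) ∘L B.flip)

@[simp]
theorem shearDerivCorrection_apply (B : E →L[𝕜] F →L[𝕜] E) (y : F) (z : E × F) :
    shearDerivCorrection B y z = (B z.1 y, 0) := rfl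

theorem hasFDerivAt_shearMap {ψ : E → F →L[𝕜] E} {x : E} (hψ : DifferentiableAt 𝕜 ψ x) (y : F) :
    HasFDerivAt (shearMap ψ)
      ((shear (ψ x) : E × F →L[𝕜] E × F) + shearDerivCorrection (fderiv 𝕜 ψ x) y) (x, y) := by
  have hψz : HasFDerivAt (fun z : E × F => ψ z.1) ((fderiv 𝕜 ψ x).comp (fst 𝕜 E F)) (x, y) :=
    hψ.hasFDerivAt.comp (x, y) hasFDerivAt_fst
  refine ((hasFDerivAt_fst.add (hψz.clm_apply hasFDerivAt_snd)).prodMk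
    hasFDerivAt_snd).congr_fderiv ?_
  ext z <;> simp [add_comm]

theorem fderiv_shearMap_zeroSection {ψ : E → F →L[𝕜] E} {x : E} (hψ : DifferentiableAt 𝕜 ψ x) :
    fderiv 𝕜 (shearMap ψ) (x, 0) = shear (ψ x) := by
  rw [(hasFDerivAt_shearMap hψ 0).fderiv, map_zero, add_zero]

theorem hasFDerivAt_shearMap_fiber (ψ : E → F →L[𝕜] E) (x : E) :
    HasFDerivAt (fun y => shearMap ψ (x, y)) ((ψ x).prod (.id 𝕜 F)) 0 :=
  ((ψ x).hasFDerivAt.const_add x).prodMk (hasFDerivAt_id 0)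

theorem hasFDerivAt_shearMap_pullback [CompleteSpace E] [CompleteSpace F] {ψ : E → F →L[𝕜] E}
    {x : E} (hψ : DifferentiableAt 𝕜 ψ x) {V : E × F → E × F} {V' : E × F →L[𝕜] E × F}
    (hV : HasFDerivAt V V' (x, 0)) :
    HasFDerivAt (fun y => (fderiv 𝕜 (shearMap ψ) (x, y)).inverse (V (shearMap ψ (x, y))))
      (((shear (ψ x)).symm : E × F →L[𝕜] E × F).comp
        (V'.comp ((ψ x).prod (.id 𝕜 F)) - (apply 𝕜 (E × F) ((shear (ψ x)).symm (V (x, 0)))).comp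
          (shearDerivCorrection (fderiv 𝕜 ψ x)))) 0 := by
  have hDΦ : (fun y => fderiv 𝕜 (shearMap ψ) (x, y)) =
      fun y => (shear (ψ x) : E × F →L[𝕜] E × F) + shearDerivCorrection (fderiv 𝕜 ψ x) y :=
    funext fun y => (hasFDerivAt_shearMap hψ y).fderiv
  have hM : HasFDerivAt (fun y => fderiv 𝕜 (shearMap ψ) (x, y))
      (shearDerivCorrection (fderiv 𝕜 ψ x)) 0 :=
    hDΦ ▸ (shearDerivCorrection (fderiv 𝕜 ψ x)).hasFDerivAt.const_add _
  have hΦ0 : shearMap ψ (x, 0) = (x, 0) := by simp [shearMap]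
  have hVΦ : HasFDerivAt (fun y => V (shearMap ψ (x, y))) (V'.comp ((ψ x).prod (.id 𝕜 F))) 0 := by
    rw [← hΦ0] at hV
    exact hV.comp (f := fun y => shearMap ψ (x, y)) 0 (hasFDerivAt_shearMap_fiber ψ x)
  simpa [hΦ0] using hM.inverse_apply (shear (ψ x)) (fderiv_shearMap_zeroSection hψ) hVΦ

theorem hasFDerivAt_zero_of_eq_zero_on_zeroSection {G : Type*} [NormedAddCommGroup G]
    [NormedSpace 𝕜 G] {T : E × F → G} {x : E} (hT : DifferentiableAt 𝕜 T (x, 0))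
    (h0 : ∀ x', T (x', 0) = 0) (hy : fderiv 𝕜 (fun y => T (x, y)) 0 = 0) :
    HasFDerivAt T (0 : E × F →L[𝕜] G) (x, 0) := by
  refine hT.hasFDerivAt.congr_fderiv (prod_ext ?_ ?_)
  · have hxT := (hT.hasFDerivAt.comp x (hasFDerivAt_prodMk_left (𝕜 := 𝕜) x (0 : F))).fderiv
    simpa [Function.comp_def, h0] using hxT.symm
  · have hyT := (hT.hasFDerivAt.comp (0 : F) (hasFDerivAt_prodMk_right (𝕜 := 𝕜) x (0 : F))).fderiv
    simpa [Function.comp_def, hy] using hyT.symm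

theorem hasFDerivAt_clm_apply_zeroSection {G : Type*} [NormedAddCommGroup G] [NormedSpace 𝕜 G]
    {μ : E → F →L[𝕜] G} {x : E} (hμ : DifferentiableAt 𝕜 μ x) :
    HasFDerivAt (fun z : E × F => μ z.1 z.2) ((μ x).comp (snd 𝕜 E F)) (x, 0) :=
  ((hμ.hasFDerivAt.comp (x, 0) hasFDerivAt_fst).clm_apply hasFDerivAt_snd).congr_fderiv
    (by ext <;> simp)

theorem hasFDerivAt_slowFastField_zeroSection {ε : 𝕜} {Λ : E → E} {μ : E → F →L[𝕜] E}
    {A : E → F →L[𝕜] F} {T : E × F → E} {R : E × F → F} {x : E} (hΛ : DifferentiableAt 𝕜 Λ x)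
    (hμ : DifferentiableAt 𝕜 μ x) (hA : DifferentiableAt 𝕜 A x)
    (hT : HasFDerivAt T (0 : E × F →L[𝕜] E) (x, 0))
    (hR : HasFDerivAt R (0 : E × F →L[𝕜] F) (x, 0)) :
    HasFDerivAt (fun z : E × F => (ε • (Λ z.1 + μ z.1 z.2 + T z), A z.1 z.2 + R z))
      ((ε • ((fderiv 𝕜 Λ x).comp (fst 𝕜 E F) + (μ x).comp (snd 𝕜 E F))).prod
        ((A x).comp (snd 𝕜 E F))) (x, 0) := by
  have hΛz := hΛ.hasFDerivAt.comp (x, (0 : F)) (hasFDerivAt_fst (𝕜 := 𝕜))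
  refine ((((hΛz.add (hasFDerivAt_clm_apply_zeroSection hμ)).add hT).const_smul ε).prodMk
    ((hasFDerivAt_clm_apply_zeroSection hA).add hR)).congr_fderiv ?_
  simp

end SlowFast

/-- **Effect of the linear SOF transformation on Taylor coefficients**.
For `F(x,y) = (ε(Λ(x)+μ(x)y+T(x,y)), A(x)y+R(x,y))` and
`Φ(x,y) = (x+εφ(x)y, y)`, the derivative `DΦ` is invertible on a neighborhood of
`ℝ^{n_s}×{0}`, so the pullback `G = (DΦ)⁻¹·(F∘Φ)` is defined there, and its Taylor
data in `y` at `y = 0` is: `G_s(x,0) = εΛ(x)`, `G_f(x,0) = 0`, `∂_yG_f(x,0) = A(x)`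
and `∂_yG_s(x,0) = ε(εDΛ(x)φ(x) + μ(x) − φ(x)A(x) − ε(∂_xφ·Λ)(x))`. -/
theorem sof_linear_transformation_taylor
    {ns nf : ℕ} (ε : ℝ)
    (Λ : EuclideanSpace ℝ (Fin ns) → EuclideanSpace ℝ (Fin ns))
    (μ : EuclideanSpace ℝ (Fin ns) →
      (EuclideanSpace ℝ (Fin nf) →L[ℝ] EuclideanSpace ℝ (Fin ns)))
    (A : EuclideanSpace ℝ (Fin ns) →
      (EuclideanSpace ℝ (Fin nf) →L[ℝ] EuclideanSpace ℝ (Fin nf)))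
    (φ : EuclideanSpace ℝ (Fin ns) →
      (EuclideanSpace ℝ (Fin nf) →L[ℝ] EuclideanSpace ℝ (Fin ns)))
    (T : EuclideanSpace ℝ (Fin ns) × EuclideanSpace ℝ (Fin nf) →
      EuclideanSpace ℝ (Fin ns))
    (R : EuclideanSpace ℝ (Fin ns) × EuclideanSpace ℝ (Fin nf) →
      EuclideanSpace ℝ (Fin nf))
    (hΛ : ContDiff ℝ 1 Λ) (hμ : ContDiff ℝ 1 μ) (hA : ContDiff ℝ 1 A)
    (hφ : ContDiff ℝ 1 φ) (hT : ContDiff ℝ 1 T) (hR : ContDiff ℝ 1 R)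
    (hT0 : ∀ x, T (x, 0) = 0 ∧ fderiv ℝ (fun y => T (x, y)) 0 = 0)
    (hR0 : ∀ x, R (x, 0) = 0 ∧ fderiv ℝ (fun y => R (x, y)) 0 = 0) :
    ∀ F Φ : EuclideanSpace ℝ (Fin ns) × EuclideanSpace ℝ (Fin nf) →
        EuclideanSpace ℝ (Fin ns) × EuclideanSpace ℝ (Fin nf),
      F = (fun z => (ε • (Λ z.1 + (μ z.1) z.2 + T z), (A z.1) z.2 + R z)) →
      Φ = (fun z => (z.1 + ε • (φ z.1) z.2, z.2)) →
      -- DΦ(x,0) is invertible for every x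
      (∀ x : EuclideanSpace ℝ (Fin ns),
        ∃ e : (EuclideanSpace ℝ (Fin ns) × EuclideanSpace ℝ (Fin nf)) ≃L[ℝ]
              (EuclideanSpace ℝ (Fin ns) × EuclideanSpace ℝ (Fin nf)),
          (e : _ →L[ℝ] _) = fderiv ℝ Φ (x, 0)) ∧
      -- the pullback is defined on a neighborhood of ℝ^{n_s} × {0}
      (∃ W : Set (EuclideanSpace ℝ (Fin ns) × EuclideanSpace ℝ (Fin nf)),
        IsOpen W ∧ (∀ x, (x, (0 : EuclideanSpace ℝ (Fin nf))) ∈ W) ∧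
        ∀ z ∈ W,
          ∃ e : (EuclideanSpace ℝ (Fin ns) × EuclideanSpace ℝ (Fin nf)) ≃L[ℝ]
                (EuclideanSpace ℝ (Fin ns) × EuclideanSpace ℝ (Fin nf)),
            (e : _ →L[ℝ] _) = fderiv ℝ Φ z) ∧
      -- Taylor data of the pullback G = (DΦ)⁻¹ · (F∘Φ)
      ∀ G : EuclideanSpace ℝ (Fin ns) × EuclideanSpace ℝ (Fin nf) →
          EuclideanSpace ℝ (Fin ns) × EuclideanSpace ℝ (Fin nf),
        G = (fun z => (fderiv ℝ Φ z).inverse (F (Φ z))) →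
        ∀ x : EuclideanSpace ℝ (Fin ns),
          (G (x, 0)).1 = ε • Λ x ∧
          (G (x, 0)).2 = 0 ∧
          fderiv ℝ (fun y => (G (x, y)).2) 0 = A x ∧
          fderiv ℝ (fun y => (G (x, y)).1) 0 =
            ε • (ε • ((fderiv ℝ Λ x).comp (φ x)) + μ x - (φ x).comp (A x) -
              ε • ((fderiv ℝ φ x) (Λ x))) := by
  intro F Φ hF hΦ
  have hφd : Differentiable ℝ φ := hφ.differentiable one_ne_zero
  have hΦψ : Φ = shearMap (ε • φ) := hΦ
  have hDΦ0 (x) : fderiv ℝ Φ (x, 0) = shear (ε • φ x) :=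
    hΦψ ▸ fderiv_shearMap_zeroSection ((hφd x).const_smul ε)
  have hψ : ContDiff ℝ 1 (ε • φ) := hφ.const_smul ε
  have hW := hψ.shearMap.isOpen_setOf_fderiv_equiv
  rw [← hΦψ] at hW
  refine ⟨fun x => ⟨_, (hDΦ0 x).symm⟩, ⟨_, hW, fun x => ⟨_, (hDΦ0 x).symm⟩, fun z hz => hz⟩, ?_⟩
  rintro G rfl x
  have hDF : HasFDerivAt F _ (x, 0) := hF ▸ hasFDerivAt_slowFastField_zeroSection (ε := ε)
    (hΛ.differentiable one_ne_zero x) (hμ.differentiable one_ne_zero x)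
    (hA.differentiable one_ne_zero x)
    (hasFDerivAt_zero_of_eq_zero_on_zeroSection (hT.differentiable one_ne_zero _)
      (fun x' => (hT0 x').1) (hT0 x).2)
    (hasFDerivAt_zero_of_eq_zero_on_zeroSection (hR.differentiable one_ne_zero _)
      (fun x' => (hR0 x').1) (hR0 x).2)
  have hG := hΦψ ▸ hasFDerivAt_shearMap_pullback ((hφd x).const_smul ε) hDF
  have hG0 : (fderiv ℝ Φ (x, 0)).inverse (F (Φ (x, 0))) = (ε • Λ x, 0) := by
    rw [hDΦ0, inverse_equiv]
    simp [hF, hΦ, (hT0 x).1, (hR0 x).1]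
  refine ⟨congrArg Prod.fst hG0, congrArg Prod.snd hG0, hG.snd.fderiv.trans ?_,
    hG.fst.fderiv.trans ?_⟩
  · refine ContinuousLinearMap.ext fun v => ?_
    simp [hF, (hT0 x).1, (hR0 x).1, fderiv_const_smul (hφd x)]
  · refine ContinuousLinearMap.ext fun v => ?_
    simp only [hF, (hT0 x).1, (hR0 x).1, fderiv_const_smul (hφd x), Pi.smul_apply, smul_add,
      map_zero, smul_zero, add_zero, sub_zero, shear_symm_apply, smul_apply, comp_sub, sub_apply,
      comp_apply, ContinuousLinearMap.prod_apply, id_apply, add_apply, coe_fst', coe_snd', map_smul,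
      ContinuousLinearEquiv.coe_coe, apply_apply, shearDerivCorrection_apply]
    module
end

section
/- Exponentially small defect in the Neishtadt-type example: let 0 < ε ≤ 1/2, set N = ⌊ε⁻¹⌋, ε̄ = ε(1 + sin(2π ε⁻¹)), and f_N(x) = Σ_{k=1}^{N} e^{−k} sin(kx). Then sup_{x ∈ ℝ} | ε^{N} ε̄ f_N^{(N)}(x) | ≤ 2 e² ε^{−1/2} e^{−1/ε}, where f_N^{(N)} denotes the N-th derivative of f_N. -/
/-!
Differentiating `N` times gives `|f_N^{(N)}| ≤ Σ_{k ≤ N} kᴺ e^{-k} ≤ N · N!`, because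
`kᴺ/N! ≤ eᵏ`. Stirling's bound `N! ≤ e √N (N/e)ᴺ` together with `εN ≤ 1` then gives
`ε^{N+1} · N · N! ≤ e √N e^{-N}`, and `N ≤ ε⁻¹ < N + 1` turns `√N e^{-N}` into
`ε^{-1/2} · e · e^{-1/ε}`; the factor `|ε̄| ≤ 2ε` supplies the remaining `2`.
-/

open Real Finset Nat

theorem Real.pow_mul_exp_neg_le_factorial {x : ℝ} (hx : 0 ≤ x) (n : ℕ) :
    x ^ n * exp (-x) ≤ n ! := by
  have h := pow_div_factorial_le_exp x hx n
  rw [div_le_iff₀ (by positivity)] at h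
  calc x ^ n * exp (-x) ≤ exp x * n ! * exp (-x) := by gcongr
    _ = n ! := by rw [mul_right_comm, ← exp_add, add_neg_cancel, exp_zero, one_mul]

theorem abs_iteratedDeriv_sum_exp_neg_mul_sin_le (N n : ℕ) (x : ℝ) :
    |iteratedDeriv n (fun t => ∑ k ∈ Icc 1 N, exp (-(k : ℝ)) * sin (k * t)) x| ≤ N * n ! := by
  rw [iteratedDeriv_fun_sum fun k _ => by fun_prop]
  simp only [iteratedDeriv_const_mul_field, iteratedDeriv_comp_const_mul (f := sin) contDiff_sin]
  calc |∑ k ∈ Icc 1 N, exp (-(k : ℝ)) * ((k : ℝ) ^ n * iteratedDeriv n sin (k * x))|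
      ≤ ∑ k ∈ Icc 1 N, |exp (-(k : ℝ)) * ((k : ℝ) ^ n * iteratedDeriv n sin (k * x))| :=
        abs_sum_le_sum_abs _ _
    _ ≤ ∑ _k ∈ Icc 1 N, (n ! : ℝ) := sum_le_sum fun k _ => by
        rw [abs_mul, abs_mul, abs_exp, abs_pow, Nat.abs_cast]
        calc exp (-(k : ℝ)) * ((k : ℝ) ^ n * |iteratedDeriv n sin (k * x)|)
            ≤ exp (-(k : ℝ)) * ((k : ℝ) ^ n * 1) := by
              gcongr; exact abs_iteratedDeriv_sin_le_one n _
          _ ≤ n ! := by simpa [mul_comm] using pow_mul_exp_neg_le_factorial k.cast_nonneg n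
    _ = N * n ! := by simp

theorem Stirling.factorial_le_exp_one_mul_sqrt_mul_pow {n : ℕ} (hn : n ≠ 0) :
    (n ! : ℝ) ≤ exp 1 * √n * (n / exp 1) ^ n := by
  have hseq : stirlingSeq n ≤ exp 1 / √2 := by
    obtain ⟨m, rfl⟩ := exists_eq_succ_of_ne_zero hn
    simpa using stirlingSeq'_antitone (Nat.zero_le m)
  rw [stirlingSeq, div_le_div_iff₀ (by positivity) (by positivity), sqrt_mul zero_le_two] at hseq
  have hsqrt2 : (0 : ℝ) < √2 := by positivity
  nlinarith [hsqrt2]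

theorem exp_neg_nat_floor_le (y : ℝ) : exp (-⌊y⌋₊) ≤ exp 1 * exp (-y) := by
  rw [← exp_add, exp_le_exp]
  linarith [Nat.lt_floor_add_one y]

theorem sqrt_nat_floor_inv_le_rpow {ε : ℝ} (hε : 0 < ε) : √⌊ε⁻¹⌋₊ ≤ ε ^ (-(1 / 2 : ℝ)) := by
  rw [rpow_neg hε.le, ← inv_rpow hε.le, ← sqrt_eq_rpow]
  exact sqrt_le_sqrt (Nat.floor_le (by positivity))

theorem pow_succ_mul_mul_factorial_le {ε : ℝ} (hε : 0 ≤ ε) {N : ℕ} (hεN : ε * N ≤ 1) :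
    ε ^ (N + 1) * (N * N !) ≤ exp 1 * √N * exp (-N) := by
  rcases eq_or_ne N 0 with rfl | hN
  · simp
  have hpow : (ε * N) ^ (N + 1) ≤ 1 := pow_le_one₀ (by positivity) hεN
  have hdiv : ((N : ℝ) / exp 1) ^ N = N ^ N * exp (-N) := by
    rw [div_pow, exp_one_pow, exp_neg, div_eq_mul_inv]
  calc ε ^ (N + 1) * (N * N !) ≤ ε ^ (N + 1) * (N * (exp 1 * √N * (N / exp 1) ^ N)) := by
        gcongr; exact Stirling.factorial_le_exp_one_mul_sqrt_mul_pow hN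
    _ = exp 1 * √N * exp (-N) * (ε * N) ^ (N + 1) := by rw [hdiv]; ring
    _ ≤ exp 1 * √N * exp (-N) := mul_le_of_le_one_right (by positivity) hpow

theorem neishtadt_defect_exponentially_small_general
    (ε : ℝ) (hε0 : 0 < ε) :
    ∀ x : ℝ,
      |ε ^ (⌊ε⁻¹⌋₊) * (ε * (1 + Real.sin (2 * Real.pi * ε⁻¹))) *
        iteratedDeriv (⌊ε⁻¹⌋₊)
          (fun t => ∑ k ∈ Finset.Icc 1 (⌊ε⁻¹⌋₊), Real.exp (-(k : ℝ)) * Real.sin (k * t))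
          x| ≤
      2 * Real.exp 2 * ε ^ (-(1 / 2 : ℝ)) * Real.exp (-1 / ε) := by
  intro x
  set N := ⌊ε⁻¹⌋₊
  have hεN : ε * N ≤ 1 := by
    calc ε * N ≤ ε * ε⁻¹ := by gcongr; exact Nat.floor_le (by positivity)
      _ = 1 := mul_inv_cancel₀ hε0.ne'
  have hεbar : |ε * (1 + sin (2 * π * ε⁻¹))| ≤ 2 * ε := by
    rw [abs_mul, abs_of_pos hε0, abs_of_nonneg (by linarith [neg_one_le_sin (2 * π * ε⁻¹)])]
    nlinarith [sin_le_one (2 * π * ε⁻¹)]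
  calc _ = ε ^ N * |ε * (1 + sin (2 * π * ε⁻¹))| *
        |iteratedDeriv N (fun t => ∑ k ∈ Icc 1 N, exp (-(k : ℝ)) * sin (k * t)) x| := by
        rw [abs_mul, abs_mul, abs_of_pos (by positivity)]
    _ ≤ ε ^ N * (2 * ε) * (N * N !) := by
        gcongr; exact abs_iteratedDeriv_sum_exp_neg_mul_sin_le N N x
    _ = 2 * (ε ^ (N + 1) * (N * N !)) := by ring
    _ ≤ 2 * (exp 1 * √N * exp (-N)) := by
        linarith [pow_succ_mul_mul_factorial_le hε0.le hεN]
    _ ≤ 2 * (exp 1 * ε ^ (-(1 / 2 : ℝ)) * (exp 1 * exp (-ε⁻¹))) := by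
        gcongr
        · exact sqrt_nat_floor_inv_le_rpow hε0
        · exact exp_neg_nat_floor_le ε⁻¹
    _ = _ := by
        rw [neg_div, one_div ε, show exp 2 = exp 1 * exp 1 by rw [← exp_add]; norm_num]
        ring

/-- **Exponentially small defect in the Neishtadt-type example**.
For `0 < ε ≤ 1/2`, `N = ⌊ε⁻¹⌋`, `ε̄ = ε(1 + sin(2πε⁻¹))` and
`f_N(x) = Σ_{k=1}^{N} e^{−k} sin(kx)`, the defect component satisfies
`sup_x |ε^N ε̄ f_N^{(N)}(x)| ≤ 2e² ε^{−1/2} e^{−1/ε}`. -/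
theorem neishtadt_defect_exponentially_small
    (ε : ℝ) (hε0 : 0 < ε) (hε : ε ≤ 1 / 2) :
    ∀ x : ℝ,
      |ε ^ (⌊ε⁻¹⌋₊) * (ε * (1 + Real.sin (2 * Real.pi * ε⁻¹))) *
        iteratedDeriv (⌊ε⁻¹⌋₊)
          (fun t => ∑ k ∈ Finset.Icc 1 (⌊ε⁻¹⌋₊), Real.exp (-(k : ℝ)) * Real.sin (k * t))
          x| ≤
      2 * Real.exp 2 * ε ^ (-(1 / 2 : ℝ)) * Real.exp (-1 / ε) :=
  neishtadt_defect_exponentially_small_general ε hε0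
end

section
/- Exact SO computations for the Lindemann mechanism: let ε > 0. (i) η₀(x) = x²/(x+ε) satisfies x(x − η₀(x)) − ε η₀(x) = 0 for all x > −ε. (ii) With X₀(x₀, y₀) = x₀ y₀ − ε x₀²/(x₀+ε) and Y₀(x₀, y₀) = ε x₀³ (x₀+2ε)/(x₀+ε)³ − (2x₀³ + 5ε x₀² + 3ε² x₀ + ε³) y₀/(x₀+ε)², the function η₁(x₀) = ε x₀³ (x₀+2ε) / ( (x₀+ε)(2x₀³ + 5ε x₀² + 3ε² x₀ + ε³) ) satisfies Y₀(x₀, η₁(x₀)) = 0 for all x₀ ≥ 0. (iii) The resulting defect ρ₁(x₀) := −η₁′(x₀) · X₀(x₀, η₁(x₀)) equals ε³ x₀⁴ (3x₀⁴ + 16ε x₀³ + 28ε² x₀² + 20ε³ x₀ + 6ε⁴) / (2x₀³ + 5εx₀² + 3ε²x₀ + ε³)³ for all x₀ ≥ 0; in particular ρ₁(0) = 0. -/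
/-!
With `P(x) = 2x³ + 5εx² + 3ε²x + ε³`, the straightened field `Y₀(x, y)` is affine in `y` with
slope `-P(x)/(x+ε)²`, which gives `η₁`. The key identity is `P(x) = (x+ε)³ + x²(x+2ε)`: it
collapses the slow component along the new manifold to `X₀(x, η₁(x)) = -εx²(x+ε)²/P(x)`, and
the quotient rule gives `η₁′(x) = ε²x²(3x⁴+16εx³+28ε²x²+20ε³x+6ε⁴)/((x+ε)²P(x)²)`. Their
product is the defect `ρ₁`, which carries the factor `x⁴` and so vanishes at the equilibrium.
-/

namespace Lindemann

noncomputable def eta₀ (ε x : ℝ) : ℝ := x ^ 2 / (x + ε)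

def cubic (ε x : ℝ) : ℝ := 2 * x ^ 3 + 5 * ε * x ^ 2 + 3 * ε ^ 2 * x + ε ^ 3

noncomputable def eta₁ (ε x : ℝ) : ℝ := ε * x ^ 3 * (x + 2 * ε) / ((x + ε) * cubic ε x)

variable {ε x : ℝ}

theorem eta₀_isRoot (h : x + ε ≠ 0) : x * (x - eta₀ ε x) - ε * eta₀ ε x = 0 := by
  unfold eta₀
  field_simp
  ring

theorem cubic_pos (hε : 0 < ε) (hx : 0 ≤ x) : 0 < cubic ε x := by
  unfold cubic
  positivity

theorem cubic_eq : cubic ε x = (x + ε) ^ 3 + x ^ 2 * (x + 2 * ε) := by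
  unfold cubic
  ring

theorem eta₁_isRoot (hP : cubic ε x ≠ 0) :
    ε * x ^ 3 * (x + 2 * ε) / (x + ε) ^ 3 - cubic ε x * eta₁ ε x / (x + ε) ^ 2 = 0 := by
  unfold eta₁
  field_simp
  ring

theorem slowField_eta₁ (h : x + ε ≠ 0) (hP : cubic ε x ≠ 0) :
    x * eta₁ ε x - ε * x ^ 2 / (x + ε) = -(ε * x ^ 2 * (x + ε) ^ 2 / cubic ε x) := by
  have key := cubic_eq (ε := ε) (x := x)
  unfold eta₁
  field_simp
  linear_combination (-ε * x ^ 2) * key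

theorem hasDerivAt_cubic :
    HasDerivAt (cubic ε) (6 * x ^ 2 + 10 * ε * x + 3 * ε ^ 2) x := by
  have h := ((((hasDerivAt_pow 3 x).const_mul 2).add ((hasDerivAt_pow 2 x).const_mul (5 * ε))).add
    ((hasDerivAt_id' x).const_mul (3 * ε ^ 2))).add_const (ε ^ 3)
  exact h.congr_deriv (by ring)

theorem hasDerivAt_eta₁ (h : x + ε ≠ 0) (hP : cubic ε x ≠ 0) :
    HasDerivAt (eta₁ ε)
      (ε ^ 2 * x ^ 2 * (3 * x ^ 4 + 16 * ε * x ^ 3 + 28 * ε ^ 2 * x ^ 2 + 20 * ε ^ 3 * x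
        + 6 * ε ^ 4) / ((x + ε) ^ 2 * cubic ε x ^ 2)) x := by
  have hnum := ((hasDerivAt_pow 3 x).const_mul ε).mul ((hasDerivAt_id' x).add_const (2 * ε))
  have hden := ((hasDerivAt_id' x).add_const ε).mul (hasDerivAt_cubic (ε := ε))
  refine (hnum.div hden (mul_ne_zero h hP)).congr_deriv ?_
  simp only [Pi.mul_apply]
  unfold cubic at hP ⊢
  field_simp
  ring

theorem defect_eq (h : x + ε ≠ 0) (hP : cubic ε x ≠ 0) :
    -deriv (eta₁ ε) x * (x * eta₁ ε x - ε * x ^ 2 / (x + ε)) =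
      ε ^ 3 * x ^ 4 * (3 * x ^ 4 + 16 * ε * x ^ 3 + 28 * ε ^ 2 * x ^ 2 + 20 * ε ^ 3 * x
        + 6 * ε ^ 4) / cubic ε x ^ 3 := by
  rw [(hasDerivAt_eta₁ h hP).deriv, slowField_eta₁ h hP]
  field_simp

end Lindemann

open Lindemann in
/-- **Exact SO computations for the Lindemann mechanism**.
(i) `η₀(x) = x²/(x+ε)` solves `x(x−η₀(x)) − εη₀(x) = 0` for `x > −ε`.
(ii) With the straightened fields `X₀, Y₀`, the next correction
`η₁(x₀) = εx₀³(x₀+2ε)/((x₀+ε)(2x₀³+5εx₀²+3ε²x₀+ε³))` solves `Y₀(x₀,η₁(x₀)) = 0`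
for `x₀ ≥ 0`.
(iii) The new defect `ρ₁(x₀) = −η₁′(x₀)·X₀(x₀,η₁(x₀))` equals
`ε³x₀⁴(3x₀⁴+16εx₀³+28ε²x₀²+20ε³x₀+6ε⁴)/(2x₀³+5εx₀²+3ε²x₀+ε³)³` for `x₀ ≥ 0`;
in particular `ρ₁(0) = 0`. -/
theorem lindemann_so_computations (ε : ℝ) (hε : 0 < ε) :
    -- (i)
    (∀ x : ℝ, -ε < x → x * (x - x ^ 2 / (x + ε)) - ε * (x ^ 2 / (x + ε)) = 0) ∧
    -- (ii)
    (∀ x₀ : ℝ, 0 ≤ x₀ →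
      ε * x₀ ^ 3 * (x₀ + 2 * ε) / (x₀ + ε) ^ 3 -
        (2 * x₀ ^ 3 + 5 * ε * x₀ ^ 2 + 3 * ε ^ 2 * x₀ + ε ^ 3) *
          (ε * x₀ ^ 3 * (x₀ + 2 * ε) /
            ((x₀ + ε) * (2 * x₀ ^ 3 + 5 * ε * x₀ ^ 2 + 3 * ε ^ 2 * x₀ + ε ^ 3))) /
          (x₀ + ε) ^ 2 = 0) ∧
    -- (iii)
    (∀ x₀ : ℝ, 0 ≤ x₀ →
      -deriv (fun s => ε * s ^ 3 * (s + 2 * ε) /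
          ((s + ε) * (2 * s ^ 3 + 5 * ε * s ^ 2 + 3 * ε ^ 2 * s + ε ^ 3))) x₀ *
        (x₀ * (ε * x₀ ^ 3 * (x₀ + 2 * ε) /
            ((x₀ + ε) * (2 * x₀ ^ 3 + 5 * ε * x₀ ^ 2 + 3 * ε ^ 2 * x₀ + ε ^ 3))) -
          ε * x₀ ^ 2 / (x₀ + ε)) =
      ε ^ 3 * x₀ ^ 4 *
          (3 * x₀ ^ 4 + 16 * ε * x₀ ^ 3 + 28 * ε ^ 2 * x₀ ^ 2 +
            20 * ε ^ 3 * x₀ + 6 * ε ^ 4) /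
        (2 * x₀ ^ 3 + 5 * ε * x₀ ^ 2 + 3 * ε ^ 2 * x₀ + ε ^ 3) ^ 3) ∧
    -- in particular ρ₁(0) = 0
    -deriv (fun s => ε * s ^ 3 * (s + 2 * ε) /
        ((s + ε) * (2 * s ^ 3 + 5 * ε * s ^ 2 + 3 * ε ^ 2 * s + ε ^ 3))) 0 *
      (0 * (ε * 0 ^ 3 * (0 + 2 * ε) /
          ((0 + ε) * (2 * 0 ^ 3 + 5 * ε * 0 ^ 2 + 3 * ε ^ 2 * 0 + ε ^ 3))) -
        ε * 0 ^ 2 / (0 + ε)) = 0 := by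
  have hxε : ∀ x : ℝ, 0 ≤ x → x + ε ≠ 0 := fun x hx => by positivity
  have hcubic : ∀ x : ℝ, 0 ≤ x → cubic ε x ≠ 0 := fun x hx => (cubic_pos hε hx).ne'
  have hdefect := fun x hx => defect_eq (hxε x hx) (hcubic x hx)
  refine ⟨fun x hx => eta₀_isRoot (by linarith), fun x hx => eta₁_isRoot (hcubic x hx),
    hdefect, ?_⟩
  simp
end
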